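/- Let M ∈ ℝ^{m×n} be a rank-r matrix, δ > 0, δ₀ = δ/6, Ω ⊆ [m]×[n] nonempty with p = |Ω|/(mn), and ρ = 8·p·δ₀² in the definition of F̃. Assume Ω satisfies the RSC property at level δ: (1/3)·p·‖M − XYᵀ‖_F² ≤ ‖P_Ω(M − XYᵀ)‖_F² ≤ 2·p·‖M − XYᵀ‖_F² for all (X,Y) ∈ K₁ ∩ K₂ ∩ K(δ). Let x_t = (X_t, Y_t), t = 0, 1, 2, …, be a sequence of pairs with x₀ ∈ (√(2/3)·K₁) ∩ (√(2/3)·K₂) ∩ K(δ₀). Write Δ_t = x_{t+1} − x_t (componentwise difference) and d(x, u) := ‖XYᵀ − UVᵀ‖_F for x = (X,Y), u = (U,V). Suppose the sequence satisfies at least one of the following three conditions for all t: (1) F̃(x_t + λ·Δ_t) ≤ 2·F̃(x₀) for every λ ∈ [0,1]; (2) there exists a convex function ψ_t : ℝ → ℝ with ψ_t(λ) ≥ F̃(x_t + λ·Δ_t) for all λ ∈ ℝ, ψ_t(0) = F̃(x_t), and λ = 1 is a global minimizer of ψ_t over ℝ; (3) F̃(x_t) ≤ 2·F̃(x₀) and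 d(x_t, x₀) ≤ (5/6)·δ. Then x_t ∈ K₁ ∩ K₂ ∩ K(2δ/3) for all t ≥ 0. -/

import Mathlib

/-!
At `x₀` the regularizer vanishes and the upper RSC bound gives `F̃(x₀) ≤ p δ₀² = ρ / 8`, so under
each of the three conditions the relevant points have `F̃ ≤ ρ / 4`. Below that level every penalty
term of `G` is at most `ρ / 4`, i.e. its argument is at most `3 / 2`, which is exactly membership
in `K₁ ∩ K₂`; and `‖P_Ω(M - XYᵀ)‖_F² ≤ ρ / 2`, which the lower RSC bound turns, inside `K(δ)`, into
`‖M - XYᵀ‖_F ≤ δ / √3 < 2δ / 3`. Hence on a segment where `F̃ ≤ ρ / 4` the continuous function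
`λ ↦ ‖M - XYᵀ‖_F` has no value in `(2δ / 3, δ]` and cannot leave `K(2δ / 3)`. Under condition (2)
the convex majorants make `F̃` nonincreasing along the iterates and bounded on each segment by its
value at the left end; under (3) the triangle inequality puts `x_t` in `K(δ)` directly.
-/

open Matrix
open scoped Classical

noncomputable section

/-- Frobenius norm of a real matrix. -/
def frob {m n : ℕ} (A : Matrix (Fin m) (Fin n) ℝ) : ℝ :=
  Real.sqrt (∑ i, ∑ j, A i j ^ 2)

/-- Euclidean norm of the `i`-th row of a matrix. -/
def rowNorm {m n : ℕ} (A : Matrix (Fin m) (Fin n) ℝ) (i : Fin m) : ℝ :=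
  Real.sqrt (∑ j, A i j ^ 2)

/-- Frobenius inner product `⟨A,B⟩ = trace(AᵀB)`. -/
def finner {m n : ℕ} (A B : Matrix (Fin m) (Fin n) ℝ) : ℝ :=
  ∑ i, ∑ j, A i j * B i j

/-- Projection onto the set of entries indexed by `Ω` (other entries are set to `0`). -/
def projOmega {m n : ℕ} (Ω : Finset (Fin m × Fin n)) (A : Matrix (Fin m) (Fin n) ℝ) :
    Matrix (Fin m) (Fin n) ℝ :=
  Matrix.of fun i j => if (i, j) ∈ Ω then A i j else 0

/-- `G₀(z) = (max{0, z-1})²`. -/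
def G0 (z : ℝ) : ℝ := max 0 (z - 1) ^ 2

/-- `G₀′(z) = 2·max{0, z-1}`. -/
def G0' (z : ℝ) : ℝ := 2 * max 0 (z - 1)

/-- The matrix whose `i`-th row is the `i`-th row of `A` and whose other rows vanish. -/
def rowMat {m n : ℕ} (A : Matrix (Fin m) (Fin n) ℝ) (i : Fin m) :
    Matrix (Fin m) (Fin n) ℝ :=
  Matrix.of fun i' j => if i' = i then A i j else 0

/-- The regularizer `G(X,Y)`. -/
def Greg {m n r : ℕ} (ρ β1 β2 βT : ℝ) (X : Matrix (Fin m) (Fin r) ℝ)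
    (Y : Matrix (Fin n) (Fin r) ℝ) : ℝ :=
  ρ * ∑ i, G0 (3 * rowNorm X i ^ 2 / (2 * β1 ^ 2)) +
    ρ * ∑ j, G0 (3 * rowNorm Y j ^ 2 / (2 * β2 ^ 2)) +
    ρ * G0 (3 * frob X ^ 2 / (2 * βT ^ 2)) +
    ρ * G0 (3 * frob Y ^ 2 / (2 * βT ^ 2))

/-- The regularized objective `F̃(X,Y)`. -/
def Ftilde {m n r : ℕ} (Ω : Finset (Fin m × Fin n)) (M : Matrix (Fin m) (Fin n) ℝ)
    (ρ β1 β2 βT : ℝ) (X : Matrix (Fin m) (Fin r) ℝ) (Y : Matrix (Fin n) (Fin r) ℝ) : ℝ :=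
  (1 / 2) * frob (projOmega Ω (M - X * Yᵀ)) ^ 2 + Greg ρ β1 β2 βT X Y

/-- Gradient of the regularizer with respect to one of the factors. -/
def gradG1 {m r : ℕ} (ρ β βT : ℝ) (X : Matrix (Fin m) (Fin r) ℝ) :
    Matrix (Fin m) (Fin r) ℝ :=
  (∑ i, (ρ * G0' (3 * rowNorm X i ^ 2 / (2 * β ^ 2)) * (3 / β ^ 2)) • rowMat X i) +
    (ρ * G0' (3 * frob X ^ 2 / (2 * βT ^ 2)) * (3 / βT ^ 2)) • X

/-- `∇_X F̃(X,Y)`. -/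
def gradX {m n r : ℕ} (Ω : Finset (Fin m × Fin n)) (M : Matrix (Fin m) (Fin n) ℝ)
    (ρ β1 βT : ℝ) (X : Matrix (Fin m) (Fin r) ℝ) (Y : Matrix (Fin n) (Fin r) ℝ) :
    Matrix (Fin m) (Fin r) ℝ :=
  projOmega Ω (X * Yᵀ - M) * Y + gradG1 ρ β1 βT X

/-- `∇_Y F̃(X,Y)`. -/
def gradY {m n r : ℕ} (Ω : Finset (Fin m × Fin n)) (M : Matrix (Fin m) (Fin n) ℝ)
    (ρ β2 βT : ℝ) (X : Matrix (Fin m) (Fin r) ℝ) (Y : Matrix (Fin n) (Fin r) ℝ) :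
    Matrix (Fin n) (Fin r) ℝ :=
  (projOmega Ω (X * Yᵀ - M))ᵀ * X + gradG1 ρ β2 βT Y

/-- Membership in `K₁`. -/
def K1mem {m n r : ℕ} (β1 β2 : ℝ) (X : Matrix (Fin m) (Fin r) ℝ)
    (Y : Matrix (Fin n) (Fin r) ℝ) : Prop :=
  (∀ i, rowNorm X i ≤ β1) ∧ ∀ j, rowNorm Y j ≤ β2

/-- Membership in `K₂`. -/
def K2mem {m n r : ℕ} (βT : ℝ) (X : Matrix (Fin m) (Fin r) ℝ)
    (Y : Matrix (Fin n) (Fin r) ℝ) : Prop :=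
  frob X ≤ βT ∧ frob Y ≤ βT

/-- Membership in `K(t) = {(X,Y) : ‖M - XYᵀ‖_F ≤ t}`. -/
def Kmem {m n r : ℕ} (M : Matrix (Fin m) (Fin n) ℝ) (t : ℝ)
    (X : Matrix (Fin m) (Fin r) ℝ) (Y : Matrix (Fin n) (Fin r) ℝ) : Prop :=
  frob (M - X * Yᵀ) ≤ t

attribute [local instance] Matrix.frobeniusNormedAddCommGroup

lemma frob_eq_norm {m n : ℕ} (A : Matrix (Fin m) (Fin n) ℝ) : frob A = ‖A‖ := by
  simp only [frob, Matrix.frobenius_norm_def, Real.norm_eq_abs, Real.rpow_two, sq_abs,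
    Real.sqrt_eq_rpow]

lemma frob_sub_le_add {m n : ℕ} (A B C : Matrix (Fin m) (Fin n) ℝ) :
    frob (A - C) ≤ frob (A - B) + frob (C - B) := by
  simpa only [frob_eq_norm, norm_sub_rev B C] using norm_sub_le_norm_sub_add_norm_sub A B C

lemma continuous_frob_sub_mul_segment {m n r : ℕ} (M : Matrix (Fin m) (Fin n) ℝ)
    (X X' : Matrix (Fin m) (Fin r) ℝ) (Y Y' : Matrix (Fin n) (Fin r) ℝ) :
    Continuous fun lam : ℝ => frob (M - (X + lam • (X' - X)) * (Y + lam • (Y' - Y))ᵀ) := by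
  simp only [frob_eq_norm]
  fun_prop

lemma frob_nonneg {m n : ℕ} (A : Matrix (Fin m) (Fin n) ℝ) : 0 ≤ frob A := Real.sqrt_nonneg _

lemma rowNorm_nonneg {m n : ℕ} (A : Matrix (Fin m) (Fin n) ℝ) (i : Fin m) : 0 ≤ rowNorm A i :=
  Real.sqrt_nonneg _

lemma G0_nonneg (z : ℝ) : 0 ≤ G0 z := sq_nonneg _

lemma G0_eq_zero_of_le_sqrt_two_thirds_mul {s β : ℝ} (hs : 0 ≤ s) (h : s ≤ √(2 / 3) * β) :
    G0 (3 * s ^ 2 / (2 * β ^ 2)) = 0 := by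
  have hsq : s ^ 2 ≤ 2 / 3 * β ^ 2 :=
    calc s ^ 2 ≤ (√(2 / 3) * β) ^ 2 := pow_le_pow_left₀ hs h 2
      _ = 2 / 3 * β ^ 2 := by rw [mul_pow, Real.sq_sqrt (by norm_num)]
  have hz : 3 * s ^ 2 / (2 * β ^ 2) ≤ 1 := div_le_one_of_le₀ (by linarith) (by positivity)
  rw [G0, max_eq_left (by linarith)]
  norm_num

lemma le_of_G0_le_quarter {s β : ℝ} (hs : 0 ≤ s) (hβ : 0 < β)
    (h : G0 (3 * s ^ 2 / (2 * β ^ 2)) ≤ 1 / 4) : s ≤ β := by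
  have hz : 3 * s ^ 2 / (2 * β ^ 2) ≤ 3 / 2 := by
    rw [G0] at h
    nlinarith [le_max_left 0 (3 * s ^ 2 / (2 * β ^ 2) - 1),
      le_max_right 0 (3 * s ^ 2 / (2 * β ^ 2) - 1)]
  rw [div_le_iff₀ (by positivity)] at hz
  nlinarith

lemma K1mem.mono {m n r : ℕ} {β1 β2 β1' β2' : ℝ} {X : Matrix (Fin m) (Fin r) ℝ}
    {Y : Matrix (Fin n) (Fin r) ℝ} (h : K1mem β1 β2 X Y) (h1 : β1 ≤ β1') (h2 : β2 ≤ β2') :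
    K1mem β1' β2' X Y :=
  ⟨fun i => (h.1 i).trans h1, fun j => (h.2 j).trans h2⟩

lemma K2mem.mono {m n r : ℕ} {βT βT' : ℝ} {X : Matrix (Fin m) (Fin r) ℝ}
    {Y : Matrix (Fin n) (Fin r) ℝ} (h : K2mem βT X Y) (hT : βT ≤ βT') : K2mem βT' X Y :=
  ⟨h.1.trans hT, h.2.trans hT⟩

lemma sqrt_two_thirds_mul_le {β : ℝ} (hβ : 0 ≤ β) : √(2 / 3) * β ≤ β :=
  mul_le_of_le_one_left hβ (Real.sqrt_le_one.2 (by norm_num))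

lemma le_of_continuousOn_of_forall_le_imp_le {f : ℝ → ℝ} {u v a b : ℝ} (huv : u ≤ v)
    (hab : a < b) (hf : ContinuousOn f (Set.Icc u v)) (hu : f u ≤ a)
    (hgap : ∀ x ∈ Set.Icc u v, f x ≤ b → f x ≤ a) : f v ≤ a := by
  by_contra! hv
  obtain ⟨x, hx, hfx⟩ := intermediate_value_Icc huv hf
    ⟨hu.trans (le_min hv.le hab.le), min_le_left (f v) b⟩
  have hxa := hgap x hx (hfx ▸ min_le_right _ _)
  rw [hfx] at hxa
  exact (lt_min hv hab).not_ge hxa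

section Regularizer

variable {m n r : ℕ} {ρ β1 β2 βT : ℝ} {X : Matrix (Fin m) (Fin r) ℝ}
  {Y : Matrix (Fin n) (Fin r) ℝ}

lemma Greg_nonneg (hρ : 0 ≤ ρ) : 0 ≤ Greg ρ β1 β2 βT X Y := by
  have hsum : ∀ {k : ℕ} (z : Fin k → ℝ), 0 ≤ ρ * ∑ i, G0 (z i) :=
    fun z => mul_nonneg hρ (Finset.sum_nonneg fun i _ => G0_nonneg _)
  exact add_nonneg (add_nonneg (add_nonneg (hsum _) (hsum _)) (mul_nonneg hρ (G0_nonneg _)))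
    (mul_nonneg hρ (G0_nonneg _))

lemma Greg_eq_zero (h1 : K1mem (√(2 / 3) * β1) (√(2 / 3) * β2) X Y)
    (h2 : K2mem (√(2 / 3) * βT) X Y) : Greg ρ β1 β2 βT X Y = 0 := by
  have hz := @G0_eq_zero_of_le_sqrt_two_thirds_mul
  rw [Greg, Finset.sum_eq_zero fun i _ => hz (rowNorm_nonneg X i) (h1.1 i),
    Finset.sum_eq_zero fun j _ => hz (rowNorm_nonneg Y j) (h1.2 j), hz (frob_nonneg X) h2.1,
    hz (frob_nonneg Y) h2.2]
  ring

lemma mem_K1_K2_of_Greg_le (hρ : 0 < ρ) (hβ1 : 0 < β1) (hβ2 : 0 < β2) (hβT : 0 < βT)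
    (h : Greg ρ β1 β2 βT X Y ≤ ρ / 4) : K1mem β1 β2 X Y ∧ K2mem βT X Y := by
  have hterm : ∀ {s β : ℝ}, 0 ≤ s → 0 < β → ρ * G0 (3 * s ^ 2 / (2 * β ^ 2)) ≤ ρ / 4 →
      s ≤ β := fun hs hβ hle =>
    le_of_G0_le_quarter hs hβ (le_of_mul_le_mul_left (by linarith) hρ)
  have hsum : ∀ {k : ℕ} (z : Fin k → ℝ) (i : Fin k), ρ * G0 (z i) ≤ ρ * ∑ i, G0 (z i) :=
    fun z i => mul_le_mul_of_nonneg_left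
      (Finset.single_le_sum (fun i _ => G0_nonneg (z i)) (Finset.mem_univ i)) hρ.le
  have hnn : ∀ {k : ℕ} (z : Fin k → ℝ), 0 ≤ ρ * ∑ i, G0 (z i) :=
    fun z => mul_nonneg hρ.le (Finset.sum_nonneg fun i _ => G0_nonneg _)
  have hX := mul_nonneg hρ.le (G0_nonneg (3 * frob X ^ 2 / (2 * βT ^ 2)))
  have hY := mul_nonneg hρ.le (G0_nonneg (3 * frob Y ^ 2 / (2 * βT ^ 2)))
  have hR := hnn fun i => 3 * rowNorm X i ^ 2 / (2 * β1 ^ 2)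
  have hC := hnn fun j => 3 * rowNorm Y j ^ 2 / (2 * β2 ^ 2)
  rw [Greg] at h
  refine ⟨⟨fun i => hterm (rowNorm_nonneg X i) hβ1 ?_,
    fun j => hterm (rowNorm_nonneg Y j) hβ2 ?_⟩, hterm (frob_nonneg X) hβT ?_,
    hterm (frob_nonneg Y) hβT ?_⟩
  · linarith [hsum (fun i => 3 * rowNorm X i ^ 2 / (2 * β1 ^ 2)) i]
  · linarith [hsum (fun j => 3 * rowNorm Y j ^ 2 / (2 * β2 ^ 2)) j]
  · linarith
  · linarith

end Regularizer

def RSCProperty (r : ℕ) {m n : ℕ} (Ω : Finset (Fin m × Fin n)) (M : Matrix (Fin m) (Fin n) ℝ)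
    (p β1 β2 βT δ : ℝ) : Prop :=
  ∀ (X : Matrix (Fin m) (Fin r) ℝ) (Y : Matrix (Fin n) (Fin r) ℝ),
    K1mem β1 β2 X Y → K2mem βT X Y → Kmem M δ X Y →
      1 / 3 * p * frob (M - X * Yᵀ) ^ 2 ≤ frob (projOmega Ω (M - X * Yᵀ)) ^ 2 ∧
        frob (projOmega Ω (M - X * Yᵀ)) ^ 2 ≤ 2 * p * frob (M - X * Yᵀ) ^ 2

section Objective

variable {m n r : ℕ} {Ω : Finset (Fin m × Fin n)} {M : Matrix (Fin m) (Fin n) ℝ}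
  {p ρ β1 β2 βT δ : ℝ} {X : Matrix (Fin m) (Fin r) ℝ} {Y : Matrix (Fin n) (Fin r) ℝ}

lemma mem_K1_K2_of_Ftilde_le (hρ : 0 < ρ) (hβ1 : 0 < β1) (hβ2 : 0 < β2) (hβT : 0 < βT)
    (h : Ftilde Ω M ρ β1 β2 βT X Y ≤ ρ / 4) :
    K1mem β1 β2 X Y ∧ K2mem βT X Y ∧ frob (projOmega Ω (M - X * Yᵀ)) ^ 2 ≤ ρ / 2 := by
  have hG := Greg_nonneg (β1 := β1) (β2 := β2) (βT := βT) (X := X) (Y := Y) hρ.le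
  have hP := sq_nonneg (frob (projOmega Ω (M - X * Yᵀ)))
  rw [Ftilde] at h
  exact ⟨(mem_K1_K2_of_Greg_le hρ hβ1 hβ2 hβT (by linarith)).1,
    (mem_K1_K2_of_Greg_le hρ hβ1 hβ2 hβT (by linarith)).2, by linarith⟩

lemma Ftilde_le_of_mem_scaled (hRSC : RSCProperty r Ω M p β1 β2 βT δ) (hp : 0 ≤ p)
    (hρ : ρ = 8 * p * (δ / 6) ^ 2) (hβ1 : 0 ≤ β1) (hβ2 : 0 ≤ β2) (hβT : 0 ≤ βT)
    (h1 : K1mem (√(2 / 3) * β1) (√(2 / 3) * β2) X Y) (h2 : K2mem (√(2 / 3) * βT) X Y)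
    (hK : Kmem M (δ / 6) X Y) : Ftilde Ω M ρ β1 β2 βT X Y ≤ ρ / 8 := by
  have hK : frob (M - X * Yᵀ) ≤ δ / 6 := hK
  have hup := (hRSC X Y (h1.mono (sqrt_two_thirds_mul_le hβ1) (sqrt_two_thirds_mul_le hβ2))
    (h2.mono (sqrt_two_thirds_mul_le hβT)) (by linarith [frob_nonneg (M - X * Yᵀ)] : _ ≤ δ)).2
  have hsq := pow_le_pow_left₀ (frob_nonneg _) hK 2
  rw [Ftilde, Greg_eq_zero h1 h2, hρ]
  nlinarith

lemma mem_of_Ftilde_le (hRSC : RSCProperty r Ω M p β1 β2 βT δ) (hp : 0 < p)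
    (hρ : ρ = 8 * p * (δ / 6) ^ 2) (hδ : 0 < δ) (hβ1 : 0 < β1) (hβ2 : 0 < β2) (hβT : 0 < βT)
    (hF : Ftilde Ω M ρ β1 β2 βT X Y ≤ ρ / 4) (hK : Kmem M δ X Y) :
    K1mem β1 β2 X Y ∧ K2mem βT X Y ∧ Kmem M (2 * δ / 3) X Y := by
  obtain ⟨h1, h2, hproj⟩ := mem_K1_K2_of_Ftilde_le (by rw [hρ]; positivity) hβ1 hβ2 hβT hF
  have hlow := (hRSC X Y h1 h2 hK).1
  have hsq : frob (M - X * Yᵀ) ^ 2 ≤ (2 * δ / 3) ^ 2 := by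
    subst hρ
    nlinarith
  exact ⟨h1, h2, (pow_le_pow_iff_left₀ (frob_nonneg _) (by positivity) two_ne_zero).1 hsq⟩

lemma mem_iterates_of_segments (hRSC : RSCProperty r Ω M p β1 β2 βT δ) (hp : 0 < p)
    (hρ : ρ = 8 * p * (δ / 6) ^ 2) (hδ : 0 < δ) (hβ1 : 0 < β1) (hβ2 : 0 < β2) (hβT : 0 < βT)
    {Xs : ℕ → Matrix (Fin m) (Fin r) ℝ} {Ys : ℕ → Matrix (Fin n) (Fin r) ℝ}
    (hseg : ∀ t : ℕ, ∀ lam ∈ Set.Icc (0 : ℝ) 1,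
      Ftilde Ω M ρ β1 β2 βT (Xs t + lam • (Xs (t + 1) - Xs t))
        (Ys t + lam • (Ys (t + 1) - Ys t)) ≤ ρ / 4)
    (h0 : Kmem M (2 * δ / 3) (Xs 0) (Ys 0)) (t : ℕ) :
    K1mem β1 β2 (Xs t) (Ys t) ∧ K2mem βT (Xs t) (Ys t) ∧ Kmem M (2 * δ / 3) (Xs t) (Ys t) := by
  have hK : ∀ t, Kmem M (2 * δ / 3) (Xs t) (Ys t) := by
    intro t
    induction t with
    | zero => exact h0
    | succ t ih =>
      -- along the segment, `‖M - XYᵀ‖_F` never takes values in `(2δ/3, δ]`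
      have hend := le_of_continuousOn_of_forall_le_imp_le zero_le_one
        (by linarith : 2 * δ / 3 < δ) (continuous_frob_sub_mul_segment M (Xs t) (Xs (t + 1))
          (Ys t) (Ys (t + 1))).continuousOn (by simpa [Kmem] using ih)
        fun lam hlam hle =>
          (mem_of_Ftilde_le hRSC hp hρ hδ hβ1 hβ2 hβT (hseg t lam hlam) hle).2.2
      simpa [Kmem] using hend
  have hF : Ftilde Ω M ρ β1 β2 βT (Xs t) (Ys t) ≤ ρ / 4 := by
    simpa using hseg t 0 (Set.left_mem_Icc.2 zero_le_one)
  obtain ⟨h1, h2, -⟩ := mem_K1_K2_of_Ftilde_le (by rw [hρ]; positivity) hβ1 hβ2 hβT hF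
  exact ⟨h1, h2, hK t⟩

end Objective

lemma forall_segment_le_of_convex_majorant {Φ : ℕ → ℝ → ℝ} {f : ℕ → ℝ}
    (hΦ1 : ∀ t, Φ t 1 = f (t + 1))
    (hψ : ∀ t, ∃ ψ : ℝ → ℝ, ConvexOn ℝ Set.univ ψ ∧ (∀ lam, Φ t lam ≤ ψ lam) ∧ ψ 0 = f t ∧
      ∀ lam, ψ 1 ≤ ψ lam) (t : ℕ) : ∀ lam ∈ Set.Icc (0 : ℝ) 1, Φ t lam ≤ f 0 := by
  have hstep : ∀ t, ∀ lam ∈ Set.Icc (0 : ℝ) 1, Φ t lam ≤ f t := by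
    intro t lam hlam
    obtain ⟨ψ, hconv, hle, hψ0, hmin⟩ := hψ t
    calc Φ t lam ≤ ψ lam := hle lam
      _ ≤ max (ψ 0) (ψ 1) := hconv.le_on_segment (Set.mem_univ _) (Set.mem_univ _)
          (by rwa [segment_eq_Icc zero_le_one])
      _ = f t := by rw [max_eq_left (hmin 0), hψ0]
  have hanti : Antitone f :=
    antitone_nat_of_succ_le fun t => hΦ1 t ▸ hstep t 1 (Set.right_mem_Icc.2 zero_le_one)
  exact fun lam hlam => (hstep t lam hlam).trans (hanti (Nat.zero_le t))

theorem stmt15_general (m n r : ℕ)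
    (M : Matrix (Fin m) (Fin n) ℝ)
    (δ δ0 : ℝ) (hδ : 0 < δ) (hδ0 : δ0 = δ / 6)
    (Ω : Finset (Fin m × Fin n)) (hΩ : Ω.Nonempty)
    (p : ℝ) (hp : p = (Ω.card : ℝ) / (m * n))
    (βT β1 β2 : ℝ) (hβT : 0 < βT) (hβ1 : 0 < β1) (hβ2 : 0 < β2)
    (ρ : ℝ) (hρ : ρ = 8 * p * δ0 ^ 2)
    (hRSC : ∀ (X : Matrix (Fin m) (Fin r) ℝ) (Y : Matrix (Fin n) (Fin r) ℝ),
      K1mem β1 β2 X Y → K2mem βT X Y → Kmem M δ X Y →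
      1 / 3 * p * frob (M - X * Yᵀ) ^ 2 ≤ frob (projOmega Ω (M - X * Yᵀ)) ^ 2 ∧
        frob (projOmega Ω (M - X * Yᵀ)) ^ 2 ≤ 2 * p * frob (M - X * Yᵀ) ^ 2)
    (Xs : ℕ → Matrix (Fin m) (Fin r) ℝ) (Ys : ℕ → Matrix (Fin n) (Fin r) ℝ)
    (h0K1 : K1mem (Real.sqrt (2 / 3) * β1) (Real.sqrt (2 / 3) * β2) (Xs 0) (Ys 0))
    (h0K2 : K2mem (Real.sqrt (2 / 3) * βT) (Xs 0) (Ys 0))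
    (h0K : Kmem M δ0 (Xs 0) (Ys 0))
    (hcond :
      (∀ t : ℕ, ∀ lam ∈ Set.Icc (0 : ℝ) 1,
          Ftilde Ω M ρ β1 β2 βT (Xs t + lam • (Xs (t + 1) - Xs t))
              (Ys t + lam • (Ys (t + 1) - Ys t)) ≤
            2 * Ftilde Ω M ρ β1 β2 βT (Xs 0) (Ys 0)) ∨
      (∀ t : ℕ, ∃ ψ : ℝ → ℝ, ConvexOn ℝ Set.univ ψ ∧
          (∀ lam : ℝ,
            Ftilde Ω M ρ β1 β2 βT (Xs t + lam • (Xs (t + 1) - Xs t))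
                (Ys t + lam • (Ys (t + 1) - Ys t)) ≤ ψ lam) ∧
          ψ 0 = Ftilde Ω M ρ β1 β2 βT (Xs t) (Ys t) ∧
          (∀ lam : ℝ, ψ 1 ≤ ψ lam)) ∨
      (∀ t : ℕ,
          Ftilde Ω M ρ β1 β2 βT (Xs t) (Ys t) ≤
              2 * Ftilde Ω M ρ β1 β2 βT (Xs 0) (Ys 0) ∧
            frob (Xs t * (Ys t)ᵀ - Xs 0 * (Ys 0)ᵀ) ≤ 5 / 6 * δ)) :
    ∀ t : ℕ, K1mem β1 β2 (Xs t) (Ys t) ∧ K2mem βT (Xs t) (Ys t) ∧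
      Kmem M (2 * δ / 3) (Xs t) (Ys t) := by
  subst hδ0
  have hp0 : 0 < p := by
    have hcard := hΩ.card_pos
    obtain ⟨⟨i, j⟩, -⟩ := hΩ
    rw [hp]
    exact div_pos (Nat.cast_pos.2 hcard)
      (mul_pos (Nat.cast_pos.2 i.pos) (Nat.cast_pos.2 j.pos))
  have hF0 := Ftilde_le_of_mem_scaled hRSC hp0.le hρ hβ1.le hβ2.le hβT.le h0K1 h0K2 h0K
  have h0 : Kmem M (2 * δ / 3) (Xs 0) (Ys 0) := le_trans h0K (by linarith)
  rcases hcond with hseg | hconv | hclose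
  · exact mem_iterates_of_segments hRSC hp0 hρ hδ hβ1 hβ2 hβT
      (fun t lam hlam => (hseg t lam hlam).trans (by linarith)) h0
  · have hdescent := forall_segment_le_of_convex_majorant
      (Φ := fun t lam => Ftilde Ω M ρ β1 β2 βT (Xs t + lam • (Xs (t + 1) - Xs t))
        (Ys t + lam • (Ys (t + 1) - Ys t)))
      (f := fun t => Ftilde Ω M ρ β1 β2 βT (Xs t) (Ys t)) (fun t => by simp) hconv
    have hρ0 : 0 ≤ ρ := by rw [hρ]; positivity
    exact mem_iterates_of_segments hRSC hp0 hρ hδ hβ1 hβ2 hβT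
      (fun t lam hlam => (hdescent t lam hlam).trans (by linarith)) h0
  · intro t
    obtain ⟨hFt, hdist⟩ := hclose t
    refine mem_of_Ftilde_le hRSC hp0 hρ hδ hβ1 hβ2 hβT (by linarith) ?_
    calc frob (M - Xs t * (Ys t)ᵀ)
        ≤ frob (M - Xs 0 * (Ys 0)ᵀ) + frob (Xs t * (Ys t)ᵀ - Xs 0 * (Ys 0)ᵀ) :=
          frob_sub_le_add _ _ _
      _ ≤ δ := by unfold Kmem at h0K; linarith

/-- **Proposition: conditions keeping the iterates in `K₁ ∩ K₂ ∩ K(2δ/3)`.** -/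
theorem stmt15 (m n r : ℕ) (hm : 1 ≤ m) (hn : 1 ≤ n) (hr : 1 ≤ r)
    (M : Matrix (Fin m) (Fin n) ℝ) (hrank : M.rank = r)
    (δ δ0 : ℝ) (hδ : 0 < δ) (hδ0 : δ0 = δ / 6)
    (Ω : Finset (Fin m × Fin n)) (hΩ : Ω.Nonempty)
    (p : ℝ) (hp : p = (Ω.card : ℝ) / (m * n))
    (βT β1 β2 : ℝ) (hβT : 0 < βT) (hβ1 : 0 < β1) (hβ2 : 0 < β2)
    (ρ : ℝ) (hρ : ρ = 8 * p * δ0 ^ 2)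
    (hRSC : ∀ (X : Matrix (Fin m) (Fin r) ℝ) (Y : Matrix (Fin n) (Fin r) ℝ),
      K1mem β1 β2 X Y → K2mem βT X Y → Kmem M δ X Y →
      1 / 3 * p * frob (M - X * Yᵀ) ^ 2 ≤ frob (projOmega Ω (M - X * Yᵀ)) ^ 2 ∧
        frob (projOmega Ω (M - X * Yᵀ)) ^ 2 ≤ 2 * p * frob (M - X * Yᵀ) ^ 2)
    (Xs : ℕ → Matrix (Fin m) (Fin r) ℝ) (Ys : ℕ → Matrix (Fin n) (Fin r) ℝ)
    (h0K1 : K1mem (Real.sqrt (2 / 3) * β1) (Real.sqrt (2 / 3) * β2) (Xs 0) (Ys 0))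
    (h0K2 : K2mem (Real.sqrt (2 / 3) * βT) (Xs 0) (Ys 0))
    (h0K : Kmem M δ0 (Xs 0) (Ys 0))
    (hcond :
      (∀ t : ℕ, ∀ lam ∈ Set.Icc (0 : ℝ) 1,
          Ftilde Ω M ρ β1 β2 βT (Xs t + lam • (Xs (t + 1) - Xs t))
              (Ys t + lam • (Ys (t + 1) - Ys t)) ≤
            2 * Ftilde Ω M ρ β1 β2 βT (Xs 0) (Ys 0)) ∨
      (∀ t : ℕ, ∃ ψ : ℝ → ℝ, ConvexOn ℝ Set.univ ψ ∧
          (∀ lam : ℝ,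
            Ftilde Ω M ρ β1 β2 βT (Xs t + lam • (Xs (t + 1) - Xs t))
                (Ys t + lam • (Ys (t + 1) - Ys t)) ≤ ψ lam) ∧
          ψ 0 = Ftilde Ω M ρ β1 β2 βT (Xs t) (Ys t) ∧
          (∀ lam : ℝ, ψ 1 ≤ ψ lam)) ∨
      (∀ t : ℕ,
          Ftilde Ω M ρ β1 β2 βT (Xs t) (Ys t) ≤
              2 * Ftilde Ω M ρ β1 β2 βT (Xs 0) (Ys 0) ∧
            frob (Xs t * (Ys t)ᵀ - Xs 0 * (Ys 0)ᵀ) ≤ 5 / 6 * δ)) :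
    ∀ t : ℕ, K1mem β1 β2 (Xs t) (Ys t) ∧ K2mem βT (Xs t) (Ys t) ∧
      Kmem M (2 * δ / 3) (Xs t) (Ys t) :=
  stmt15_general m n r M δ δ0 hδ hδ0 Ω hΩ p hp βT β1 β2 hβT hβ1 hβ2 ρ hρ hRSC Xs Ys h0K1 h0K2 h0K
    hcond

end
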